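/- arXiv:1811.11630 — 2 statements merged into one kernel-verified Lean document; each statement's English description precedes it below -/
import Mathlib

section
/- Let U be a type, and let R, R' ⊆ U × U be binary relations. Call a function F : U → U a canonification of R if for all x, (x, F x) ∈ R. Suppose there exist functions p, q : U → U such that for every canonification F' of R', the composite p ∘ F' ∘ q is a canonification of R (strong reducibility of R to R'). Suppose further that R' admits at least one canonification, and that R is 'slim' on a set X ⊆ U, meaning: for every z in the image R[X] = { y : ∃ x ∈ X, (x,y) ∈ R } there exists some x ∈ X such that z is the unique element with (x, z) ∈ R. Then the cardinality of R[X] is at most the cardinality of R'[q[X]], where R'[q[X]] = { y : ∃ x ∈ X, (q x, y) ∈ R' }. -/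
theorem stmt_4 {U : Type*} (R R' : Set (U × U)) (p q : U → U) (X : Set U)
    (hred : ∀ F' : U → U, (∀ x, (x, F' x) ∈ R') → ∀ x, (x, p (F' (q x))) ∈ R)
    (hcan : ∃ F' : U → U, ∀ x, (x, F' x) ∈ R')
    (hslim : ∀ z ∈ {y | ∃ x ∈ X, (x, y) ∈ R},
      ∃ x ∈ X, (x, z) ∈ R ∧ ∀ z', (x, z') ∈ R → z' = z) :
    Cardinal.mk {y | ∃ x ∈ X, (x, y) ∈ R} ≤
      Cardinal.mk {y | ∃ x ∈ X, (q x, y) ∈ R'} := by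
  obtain ⟨F', hF'⟩ := hcan
  choose w hwX hwR hwU using hslim
  refine Cardinal.mk_le_of_injective (f := fun z =>
    ⟨F' (q (w z z.2)), w z z.2, hwX z z.2, hF' (q (w z z.2))⟩) ?_
  intro z1 z2 h
  have h' : F' (q (w z1 z1.2)) = F' (q (w z2 z2.2)) := congrArg Subtype.val h
  have e1 : z1.1 = p (F' (q (w z1 z1.2))) :=
    (hwU z1 z1.2 _ (hred F' hF' (w z1 z1.2))).symm
  have e2 : z2.1 = p (F' (q (w z2 z2.2))) :=
    (hwU z2 z2.2 _ (hred F' hF' (w z2 z2.2))).symm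
  ext
  rw [e1, e2, h']
end

section
/- Let U be a type, R, R' binary relations on U, and p, q : U → U functions such that for every canonification F' of R' (i.e., every F' with ∀ x, (x, F' x) ∈ R'), the composite p ∘ F' ∘ q is a canonification of R. Let X, Y ⊆ U be sets such that: (i) X is closed under q (q[X] ⊆ X), (ii) Y is closed under p (p[Y] ⊆ Y), (iii) R' is total (∀ x ∃ y, (x,y) ∈ R'), and (iv) for every x ∈ X there exists y ∈ Y with (x, y) ∈ R'. Then for every x ∈ X there exists y ∈ Y with (x, y) ∈ R. -/
theorem stmt_6 {U : Type*} (R R' : Set (U × U)) (p q : U → U) (X Y : Set U)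
    (hred : ∀ F' : U → U, (∀ x, (x, F' x) ∈ R') → ∀ x, (x, p (F' (q x))) ∈ R)
    (hqX : q '' X ⊆ X) (hpY : p '' Y ⊆ Y)
    (htotal : ∀ x : U, ∃ y : U, (x, y) ∈ R')
    (hXY : ∀ x ∈ X, ∃ y ∈ Y, (x, y) ∈ R') :
    ∀ x ∈ X, ∃ y ∈ Y, (x, y) ∈ R := by
  classical
  have hF : ∀ x : U, ∃ y : U, (x, y) ∈ R' ∧ (x ∈ X → y ∈ Y) := by
    intro x
    by_cases hx : x ∈ X
    · obtain ⟨y, hy, hr⟩ := hXY x hx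
      exact ⟨y, hr, fun _ => hy⟩
    · obtain ⟨y, hr⟩ := htotal x
      exact ⟨y, hr, fun h => absurd h hx⟩
  choose F' hF1 hF2 using hF
  intro x hx
  refine ⟨p (F' (q x)), hpY ⟨_, hF2 _ (hqX ⟨x, hx, rfl⟩), rfl⟩, hred F' hF1 x⟩
end
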